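/- With p^m ≡ 3 (mod 4), α a nonzero non-square of F_{p^m}, β ≠ 0, α₀^{p^s} = α, and γ^4 = -4α₀: a nonzero linear polynomial cx + d with c ≠ 0, c, d ∈ F_{p^m}, is a unit in the ring 𝓡 = R[x]/⟨x^{4p^s} - (α+βu)⟩, where R = F_{p^m}[u]/⟨u²⟩. -/

import Mathlib

open Polynomial

/-- The chain ring `R = F_{p^m}[u]/⟨u²⟩`. -/
abbrev Ru (K : Type) [Field K] : Type := K[X] ⧸ Ideal.span {(X : K[X]) ^ 2}

/-- The element `u` of `R`. -/
noncomputable def uR (K : Type) [Field K] : Ru K :=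
  Ideal.Quotient.mk _ (X : K[X])

noncomputable instance instCommRingRu (K : Type) [Field K] : CommRing (Ru K) :=
  Ideal.Quotient.commRing _

/-- The natural inclusion of `F_{p^m}` into `R`. -/
noncomputable def tR (K : Type) [Field K] (a : K) : Ru K :=
  Ideal.Quotient.mk _ (C a : K[X])

/-- The ambient ring `R[x]/⟨xⁿ - λ⟩` of `λ`-constacyclic codes of length `n` over `R`. -/
abbrev RC (K : Type) [Field K] (lam : Ru K) (n : ℕ) : Type :=
  (Ru K)[X] ⧸ Ideal.span {(X : (Ru K)[X]) ^ n - C lam}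

/-- The canonical projection `R[x] → R[x]/⟨xⁿ - λ⟩`. -/
noncomputable def mkC (K : Type) [Field K] (lam : Ru K) (n : ℕ) :
    (Ru K)[X] →+* RC K lam n :=
  Ideal.Quotient.mk _

/-! Write `cx + d = c (x - a)` with `a = -d/c`. In `R[x]/⟨xⁿ - λ⟩` the factor `x - a` divides
`xⁿ - aⁿ = λ - aⁿ`, and for `λ = α + βu` this constant is `(α - aⁿ) + βu`. As `n = 4pˢ` is even and
`α` is not a square, `α - aⁿ ≠ 0`, so the constant is a unit of `R` (`βu` is nilpotent); hence so is
`cx + d`. -/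

section Constacyclic

variable {A : Type*} [CommRing A] {lam : A} {n : ℕ}

local notation "π" => Ideal.Quotient.mk (Ideal.span {(X : A[X]) ^ n - C lam})

theorem isUnit_mk_X_sub_C_of_isUnit_sub_pow {a : A} (ha : IsUnit (lam - a ^ n)) :
    IsUnit (π (X - C a)) := by
  have hconst : π (X ^ n - C a ^ n) = π (C (lam - a ^ n)) := by
    rw [Ideal.Quotient.eq]
    exact Ideal.mem_span_singleton.2 ⟨1, by rw [C_sub, C_pow]; ring⟩
  refine isUnit_of_dvd_unit ?_ ((isUnit_C.2 ha).map π)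
  rw [← hconst]
  exact map_dvd π (sub_dvd_pow_sub_pow X (C a) n)

theorem isUnit_mk_C_mul_X_add_C {c d a : A} (hc : IsUnit c) (had : c * a = -d)
    (ha : IsUnit (lam - a ^ n)) : IsUnit (π (C c * X + C d)) := by
  have hfac : C c * X + C d = C c * (X - C a) := by
    rw [mul_sub, ← C_mul, had, C_neg, sub_neg_eq_add]
  rw [hfac, map_mul]
  exact ((isUnit_C.2 hc).map π).mul (isUnit_mk_X_sub_C_of_isUnit_sub_pow ha)

end Constacyclic

section DualNumbers

variable (K : Type) [Field K]

noncomputable def tRHom : K →+* Ru K :=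
  (Ideal.Quotient.mk _).comp C

theorem tR_eq_tRHom (a : K) : tR K a = tRHom K a := rfl

theorem uR_mul_self : uR K * uR K = 0 := by
  rw [uR, ← map_mul, Ideal.Quotient.eq_zero_iff_mem, ← sq]
  exact Ideal.mem_span_singleton_self _

variable {K}

theorem isUnit_tR {a : K} (ha : a ≠ 0) : IsUnit (tR K a) :=
  (Ne.isUnit ha).map (tRHom K)

theorem isUnit_tR_add_tR_mul_uR {a : K} (ha : a ≠ 0) (b : K) :
    IsUnit (tR K a + tR K b * uR K) := by
  have hnil : IsNilpotent (tR K b * uR K) :=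
    ⟨2, by rw [sq, mul_mul_mul_comm, uR_mul_self, mul_zero]⟩
  exact hnil.isUnit_add_left_of_commute (isUnit_tR ha) (Commute.all _ _)

end DualNumbers

theorem sub_pow_ne_zero_of_not_isSquare {F : Type*} [Field F] {α : F} (hα : ¬ IsSquare α)
    {n : ℕ} (hn : Even n) (a : F) : α - a ^ n ≠ 0 := fun h =>
  hα (sub_eq_zero.1 h ▸ hn.isSquare_pow a)

theorem stmt10_general (p s : ℕ)
    (K : Type) [Field K] (α β : K) (hns : ¬ IsSquare α)
    (c d : K) (hc : c ≠ 0) :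
    IsUnit (mkC K (tR K α + tR K β * uR K) (4 * p ^ s)
      (C (tR K c) * X + C (tR K d))) := by
  set a : K := -(c⁻¹ * d)
  have had : tR K c * tR K a = -tR K d := by
    rw [tR_eq_tRHom, tR_eq_tRHom, tR_eq_tRHom, ← map_mul, ← map_neg, mul_neg,
      mul_inv_cancel_left₀ hc]
  have hshift : tR K α + tR K β * uR K - tR K a ^ (4 * p ^ s)
      = tR K (α - a ^ (4 * p ^ s)) + tR K β * uR K := by
    simp only [tR_eq_tRHom, map_sub, map_pow]
    ring
  have heven : Even (4 * p ^ s) := ⟨2 * p ^ s, by ring⟩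
  refine isUnit_mk_C_mul_X_add_C (isUnit_tR hc) had ?_
  rw [hshift]
  exact isUnit_tR_add_tR_mul_uR (sub_pow_ne_zero_of_not_isSquare hns heven a) β

theorem stmt10 (p s m : ℕ) (hp : p.Prime) (hodd : Odd p) (hs : 0 < s) (hm : 0 < m)
    (K : Type) [Field K] [Fintype K] (hK : Fintype.card K = p ^ m)
    (h3 : p ^ m % 4 = 3) (α β : K) (hα : α ≠ 0) (hns : ¬ IsSquare α) (hβ : β ≠ 0)
    (α₀ : K) (hα₀ : α₀ ^ p ^ s = α) (γ : K) (hγ : γ ^ 4 = -4 * α₀)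
    (c d : K) (hc : c ≠ 0) :
    IsUnit (mkC K (tR K α + tR K β * uR K) (4 * p ^ s)
      (C (tR K c) * X + C (tR K d))) :=
  stmt10_general p s K α β hns c d hc
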